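/- arXiv:1109.3436 — 3 statements merged into one kernel-verified Lean document; each statement's English description precedes it below -/
import Mathlib

section
/- Let γ: ℝ → ℝ^n be the moment curve γ(t) = (1, t, t^2, ..., t^{n-1}), fix i ≤ n and a real number s. For each natural number j, let s_1^{(j)}, ..., s_i^{(j)} be i distinct real numbers, and suppose that for each p = 1, ..., i one has s_p^{(j)} → s as j → ∞. Then for each p = 1, ..., i there is a sequence of vectors v_p^{(j)} ∈ ℝ^n such that for every j the vectors v_1^{(j)}, ..., v_i^{(j)} span the same subspace of ℝ^n as γ(s_1^{(j)}), ..., γ(s_i^{(j)}), and for each p the sequence v_p^{(j)} converges to γ^{(p-1)}(s)/(p-1)! as j → ∞. Consequently the secant i-planes span{γ(s_1^{(j)}), ..., γ(s_i^{(j)})} converge to the osculating subspace F_i(s) = span{γ(s), γ'(s), ..., γ^{(i-1)}(s)}. -/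
open Finset

noncomputable section SecantAux

/-- `hhAux u m d` = complete homogeneous symmetric polynomial `h_d(u 0, …, u (m-1))`. -/
def hhAux (u : ℕ → ℝ) : ℕ → ℕ → ℝ
  | 0, d => if d = 0 then 1 else 0
  | m+1, d => ∑ j ∈ Finset.range (d+1), u m ^ j * hhAux u m (d - j)

/-- `hxAux u x m d` = `h_d(u 0, …, u (m-1), x)`. -/
def hxAux (u : ℕ → ℝ) (x : ℝ) (m d : ℕ) : ℝ :=
  ∑ j ∈ Finset.range (d+1), x ^ j * hhAux u m (d - j)

lemma hhAux_succ (u : ℕ → ℝ) (m d : ℕ) : hhAux u (m+1) d = hxAux u (u m) m d := rfl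

lemma hhAux_zero (u : ℕ → ℝ) (m : ℕ) : hhAux u m 0 = 1 := by
  induction m with
  | zero => simp [hhAux]
  | succ m ih => simp [hhAux, ih]

lemma hxAux_zero (u : ℕ → ℝ) (x : ℝ) (m : ℕ) : hxAux u x m 0 = 1 := by
  simp [hxAux, hhAux_zero]

lemma hxAux_succ (u : ℕ → ℝ) (x : ℝ) (m d : ℕ) :
    hxAux u x m (d+1) = hhAux u m (d+1) + x * hxAux u x m d := by
  rw [hxAux, Finset.sum_range_succ']
  simp only [pow_zero, one_mul, Nat.sub_zero, Nat.succ_sub_succ]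
  rw [hxAux, Finset.mul_sum, add_comm]
  congr 1
  refine Finset.sum_congr rfl fun j _ => by ring

lemma hhAux_succ_succ (u : ℕ → ℝ) (m d : ℕ) :
    hhAux u (m+1) (d+1) = hhAux u m (d+1) + u m * hhAux u (m+1) d := by
  rw [hhAux_succ, hxAux_succ, hhAux_succ]

lemma hxAux_rec (u : ℕ → ℝ) (x : ℝ) (m : ℕ) : ∀ d : ℕ,
    hxAux u x m (d+1) = hhAux u (m+1) (d+1) + (x - u m) * hxAux u x (m+1) d := by
  intro d
  induction d with
  | zero =>
      rw [hxAux_succ, hxAux_zero, hhAux_succ_succ, hxAux_zero, hhAux_zero]; ring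
  | succ d ih =>
      rw [hxAux_succ u x m (d+1), ih, hxAux_succ u x (m+1) d, hhAux_succ_succ u m (d+1)]; ring

/-- Newton product `∏_{r<p} (x - u r)`. -/
def NpAux (u : ℕ → ℝ) (p : ℕ) (x : ℝ) : ℝ := ∏ r ∈ Finset.range p, (x - u r)

/-- divided difference of `x^k` over nodes `u 0, …, u p` (as a polynomial in the nodes). -/
def ddAux (u : ℕ → ℝ) (p k : ℕ) : ℝ := if p ≤ k then hhAux u (p+1) (k-p) else 0

lemma NpAux_succ (u : ℕ → ℝ) (p : ℕ) (x : ℝ) :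
    NpAux u (p+1) x = NpAux u p x * (x - u p) := Finset.prod_range_succ _ _

lemma hxAux_bot (u : ℕ → ℝ) (x : ℝ) (k : ℕ) : hxAux u x 0 k = x ^ k := by
  rw [hxAux]
  rw [Finset.sum_eq_single k]
  · simp [hhAux]
  · intro j hj hjk
    have : j < k := lt_of_le_of_ne (Nat.lt_succ_iff.1 (Finset.mem_range.1 hj)) hjk
    simp only [hhAux, Nat.sub_eq_zero_iff_le]
    rw [if_neg (by omega)]
    ring
  · intro h; exact absurd (Finset.self_mem_range_succ k) h

lemma newtonAux (u : ℕ → ℝ) (x : ℝ) (k : ℕ) : ∀ m : ℕ,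
    x ^ k = ∑ p ∈ Finset.range m, ddAux u p k * NpAux u p x +
      (if m ≤ k then hxAux u x m (k - m) * NpAux u m x else 0) := by
  intro m
  induction m with
  | zero =>
      simp [NpAux, hxAux_bot, Nat.zero_le]
  | succ m ih =>
      rw [Finset.sum_range_succ]
      rcases le_or_gt (m+1) k with hmk | hmk
      · have hm : m ≤ k := Nat.le_of_succ_le hmk
        have hk : k - m = (k - (m+1)) + 1 := by omega
        rw [ih, if_pos hm, if_pos hmk, hk, hxAux_rec, ddAux, if_pos hm, hk, NpAux_succ]
        ring
      · rcases le_or_gt m k with hm | hm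
        · have hmeq : m = k := by omega
          rw [ih, if_pos hm, if_neg (by omega), ddAux, if_pos hm]
          subst hmeq
          rw [Nat.sub_self, hxAux_zero, hhAux_zero]
          ring
        · rw [ih, if_neg (by omega), if_neg (by omega), ddAux, if_neg (by omega)]
          ring

lemma newton_at_node (u : ℕ → ℝ) (k q m : ℕ) (hq : q < m) :
    (u q) ^ k = ∑ p ∈ Finset.range m, ddAux u p k * NpAux u p (u q) := by
  have h := newtonAux u (u q) k m
  have hNp : NpAux u m (u q) = 0 :=
    Finset.prod_eq_zero (Finset.mem_range.2 hq) (sub_self _)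
  rw [h, hNp]
  split <;> ring

/-- coefficients of the Newton product `∏_{r<p}(x - u r)` in the basis `(x-s)^m`. -/
def ccAux (u : ℕ → ℝ) (s : ℝ) : ℕ → ℕ → ℝ
  | 0, m => if m = 0 then 1 else 0
  | p+1, m => (if m = 0 then 0 else ccAux u s p (m-1)) + (s - u p) * ccAux u s p m

lemma ccAux_eq_zero (u : ℕ → ℝ) (s : ℝ) : ∀ p m : ℕ, p < m → ccAux u s p m = 0 := by
  intro p
  induction p with
  | zero => intro m hm; rw [ccAux, if_neg (by omega)]
  | succ p ih =>
      intro m hm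
      have hm0 : m ≠ 0 := by omega
      rw [ccAux, if_neg hm0, ih (m-1) (by omega), ih m (by omega)]
      ring

lemma NpAux_eq (u : ℕ → ℝ) (s : ℝ) (x : ℝ) : ∀ p : ℕ,
    NpAux u p x = ∑ m ∈ Finset.range (p+1), ccAux u s p m * (x - s) ^ m := by
  intro p
  induction p with
  | zero => simp [NpAux, ccAux]
  | succ p ih =>
      have hcc : ccAux u s p (p+1) = 0 := ccAux_eq_zero u s p (p+1) (by omega)
      have expand : ∀ m : ℕ, ccAux u s (p+1) (m+1)
          = ccAux u s p m + (s - u p) * ccAux u s p (m+1) := by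
        intro m; rw [ccAux]; simp
      have e0 : ccAux u s (p+1) 0 = (s - u p) * ccAux u s p 0 := by rw [ccAux]; simp
      have F3 : (∑ m ∈ Finset.range (p+1), ccAux u s p (m+1) * (x-s)^(m+1)) + ccAux u s p 0
          = ∑ m ∈ Finset.range (p+1), ccAux u s p m * (x-s)^m := by
        have h1 := Finset.sum_range_succ' (fun m => ccAux u s p m * (x-s)^m) (p+1)
        rw [Finset.sum_range_succ (fun m => ccAux u s p m * (x-s)^m) (p+1), hcc] at h1
        simp only [pow_zero, mul_one, zero_mul, add_zero] at h1
        linarith [h1]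
      have TX : (∑ m ∈ Finset.range (p+1), ccAux u s p m * (x-s)^m) * (x - s)
          = ∑ m ∈ Finset.range (p+1), ccAux u s p m * (x-s)^(m+1) := by
        rw [Finset.sum_mul]
        exact Finset.sum_congr rfl fun m _ => by ring
      have split : ∑ m ∈ Finset.range (p+1),
            (ccAux u s p m + (s - u p) * ccAux u s p (m+1)) * (x-s)^(m+1)
          = (∑ m ∈ Finset.range (p+1), ccAux u s p m * (x-s)^(m+1))
            + (s - u p) * ∑ m ∈ Finset.range (p+1), ccAux u s p (m+1) * (x-s)^(m+1) := by
        rw [Finset.mul_sum, ← Finset.sum_add_distrib]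
        exact Finset.sum_congr rfl fun m _ => by ring
      rw [NpAux_succ, ih,
        Finset.sum_range_succ' (fun m => ccAux u s (p+1) m * (x - s) ^ m) (p+1)]
      simp only [expand, e0, pow_zero, mul_one]
      linear_combination TX - split - (s - u p) * F3

/-- the key expansion of `(u q)^k` in powers of `(u q - s)`, with coefficients `vAux`. -/
lemma node_expansion (u : ℕ → ℝ) (s : ℝ) (k i q : ℕ) (hq : q < i) :
    (u q) ^ k = ∑ m ∈ Finset.range i, (u q - s) ^ m *
      ∑ p ∈ Finset.range i, ccAux u s p m * ddAux u p k := by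
  rw [newton_at_node u k q i hq]
  have step1 : ∀ p ∈ Finset.range i, ddAux u p k * NpAux u p (u q)
      = ∑ m ∈ Finset.range i, ccAux u s p m * ddAux u p k * (u q - s) ^ m := by
    intro p hp
    rw [NpAux_eq u s (u q) p, Finset.mul_sum]
    rw [Finset.sum_subset (Finset.range_subset_range.2 (Finset.mem_range.1 hp))]
    · exact Finset.sum_congr rfl fun m _ => by ring
    · intro m _ hm
      rw [ccAux_eq_zero u s p m (by simp only [Finset.mem_range] at hm; omega)]
      ring
  rw [Finset.sum_congr rfl step1, Finset.sum_comm]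
  refine Finset.sum_congr rfl fun m _ => ?_
  rw [Finset.mul_sum]
  exact Finset.sum_congr rfl fun p _ => by ring

lemma hhAux_const (s : ℝ) : ∀ m d : ℕ,
    hhAux (fun _ => s) (m+1) d = (Nat.choose (d + m) m : ℝ) * s ^ d := by
  intro m
  induction m with
  | zero =>
      intro d
      rw [hhAux_succ, hxAux_bot]
      simp
  | succ m ih =>
      intro d
      rw [show hhAux (fun _ => s) (m+2) d
          = ∑ j ∈ Finset.range (d+1), s ^ j * hhAux (fun _ => s) (m+1) (d - j) from rfl]
      have : ∀ j ∈ Finset.range (d+1),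
          s ^ j * hhAux (fun _ => s) (m+1) (d - j)
            = (Nat.choose (d - j + m) m : ℝ) * s ^ d := by
        intro j hj
        have hj' := Finset.mem_range.1 hj
        rw [ih (d - j), ← mul_assoc, mul_comm (s ^ j), mul_assoc, ← pow_add]
        congr 2
        omega
      rw [Finset.sum_congr rfl this, ← Finset.sum_mul, ← Nat.cast_sum]
      congr 2
      have hr : ∑ j ∈ Finset.range (d+1), Nat.choose (d - j + m) m
          = ∑ j ∈ Finset.range (d+1), Nat.choose (j + m) m := by
        rw [← Finset.sum_range_reflect]
        refine Finset.sum_congr rfl fun j hj => ?_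
        congr 2
        have := Finset.mem_range.1 hj
        omega
      rw [hr, Nat.sum_range_add_choose d m, show d + m + 1 = d + (m+1) from by omega]

lemma ddAux_const (s : ℝ) (p k : ℕ) :
    ddAux (fun _ => s) p k
      = (Nat.descFactorial k p : ℝ) * s ^ (k - p) / (Nat.factorial p : ℝ) := by
  rw [ddAux]
  rcases le_or_gt p k with h | h
  · rw [if_pos h, hhAux_const s p (k - p), Nat.sub_add_cancel h,
      Nat.descFactorial_eq_factorial_mul_choose]
    rw [Nat.cast_mul]
    field_simp
  · rw [if_neg (by omega), Nat.descFactorial_eq_zero_iff_lt.2 h]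
    simp

lemma ccAux_const (s : ℝ) : ∀ p m : ℕ,
    ccAux (fun _ => s) s p m = if m = p then 1 else 0 := by
  intro p
  induction p with
  | zero => intro m; rfl
  | succ p ih =>
      intro m
      rw [ccAux, sub_self, zero_mul, add_zero]
      rcases Nat.eq_zero_or_pos m with hm | hm
      · subst hm; simp
      · rw [if_neg (by omega), ih (m-1)]
        by_cases h : m = p + 1
        · rw [if_pos (by omega), if_pos h]
        · rw [if_neg (by omega), if_neg h]

open Filter Topology

variable {U : ℕ → ℕ → ℝ} {s : ℝ}

lemma tendsto_hhAux (hU : ∀ q : ℕ, Tendsto (fun j => U j q) atTop (𝓝 s)) :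
    ∀ m d : ℕ, Tendsto (fun j => hhAux (U j) m d) atTop (𝓝 (hhAux (fun _ => s) m d)) := by
  intro m
  induction m with
  | zero => intro d; simp only [hhAux]; exact tendsto_const_nhds
  | succ m ih =>
      intro d
      show Tendsto (fun j => ∑ l ∈ Finset.range (d+1), U j m ^ l * hhAux (U j) m (d - l))
        atTop (𝓝 (∑ l ∈ Finset.range (d+1), (fun _ => s) m ^ l * hhAux (fun _ => s) m (d - l)))
      exact tendsto_finset_sum _ fun l _ => ((hU m).pow l).mul (ih (d - l))

lemma tendsto_ddAux (hU : ∀ q : ℕ, Tendsto (fun j => U j q) atTop (𝓝 s)) (p k : ℕ) :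
    Tendsto (fun j => ddAux (U j) p k) atTop (𝓝 (ddAux (fun _ => s) p k)) := by
  unfold ddAux
  split
  · exact tendsto_hhAux hU _ _
  · exact tendsto_const_nhds

lemma tendsto_ccAux (hU : ∀ q : ℕ, Tendsto (fun j => U j q) atTop (𝓝 s)) :
    ∀ p m : ℕ, Tendsto (fun j => ccAux (U j) s p m) atTop
      (𝓝 (ccAux (fun _ => s) s p m)) := by
  intro p
  induction p with
  | zero => intro m; simp only [ccAux]; exact tendsto_const_nhds
  | succ p ih =>
      intro m
      show Tendsto (fun j => (if m = 0 then 0 else ccAux (U j) s p (m-1))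
          + (s - U j p) * ccAux (U j) s p m) atTop
        (𝓝 ((if m = 0 then 0 else ccAux (fun _ => s) s p (m-1))
          + (s - s) * ccAux (fun _ => s) s p m))
      refine Tendsto.add ?_ ((tendsto_const_nhds.sub (hU p)).mul (ih m))
      split
      · exact tendsto_const_nhds
      · exact ih (m-1)

lemma span_rows_mul_le {i n : ℕ} (A : Matrix (Fin i) (Fin i) ℝ)
    (W : Matrix (Fin i) (Fin n) ℝ) :
    Submodule.span ℝ (Set.range fun q => (A * W) q)
      ≤ Submodule.span ℝ (Set.range fun m => W m) := by
  rw [Submodule.span_le]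
  rintro _ ⟨q, rfl⟩
  show (A * W) q ∈ Submodule.span ℝ (Set.range fun m => W m)
  have : (A * W) q = ∑ m : Fin i, A q m • W m := by
    ext k
    simp [Matrix.mul_apply, Finset.sum_apply]
  rw [this]
  exact Submodule.sum_mem _ fun m _ =>
    Submodule.smul_mem _ _ (Submodule.subset_span ⟨m, rfl⟩)

lemma span_rows_mul_eq {i n : ℕ} (A : Matrix (Fin i) (Fin i) ℝ)
    (hA : IsUnit A.det) (W : Matrix (Fin i) (Fin n) ℝ) :
    Submodule.span ℝ (Set.range fun q => (A * W) q)
      = Submodule.span ℝ (Set.range fun m => W m) := by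
  refine le_antisymm (span_rows_mul_le A W) ?_
  have hW : W = A⁻¹ * (A * W) := by
    rw [← Matrix.mul_assoc, Matrix.nonsing_inv_mul A hA, Matrix.one_mul]
  conv_lhs => rw [hW]
  exact span_rows_mul_le A⁻¹ (A * W)

lemma span_range_smul_eq {ι M : Type*} [AddCommGroup M] [Module ℝ M]
    (c : ι → ℝ) (hc : ∀ p, c p ≠ 0) (g : ι → M) :
    Submodule.span ℝ (Set.range fun p => c p • g p) = Submodule.span ℝ (Set.range g) := by
  apply le_antisymm <;> rw [Submodule.span_le] <;> rintro _ ⟨p, rfl⟩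
  · exact Submodule.smul_mem _ _ (Submodule.subset_span ⟨p, rfl⟩)
  · have : g p = (c p)⁻¹ • (c p • g p) := by
      rw [smul_smul, inv_mul_cancel₀ (hc p), one_smul]
    rw [this]
    exact Submodule.smul_mem _ _ (Submodule.subset_span ⟨p, rfl⟩)

end SecantAux

/-- If, for each `j`, `t j 1, …, t j i` are `i` distinct real numbers
all converging to `s` as `j → ∞`, then there are spanning families `v j` of the
secant `i`-planes `span {γ (t j p)}` converging vectorwise to `γ^{(p-1)}(s)/(p-1)!`
(here `0`-indexed: `v j p → γ^{(p)}(s)/p!`), whose limits span the osculating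
subspace `F_i(s) = span {γ(s), γ'(s), …, γ^{(i-1)}(s)}`.  Thus the secant planes
converge to the osculating subspace. -/
theorem secant_planes_tendsto_osculating (n i : ℕ) (hin : i ≤ n)
    (γ : ℝ → Fin n → ℝ) (hγ : ∀ y : ℝ, ∀ k : Fin n, γ y k = y ^ (k : ℕ))
    (s : ℝ) (t : ℕ → Fin i → ℝ) (hinj : ∀ j : ℕ, Function.Injective (t j))
    (hlim : ∀ p : Fin i, Filter.Tendsto (fun j : ℕ => t j p) Filter.atTop (nhds s)) :
    ∃ v : ℕ → Fin i → Fin n → ℝ,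
      (∀ j : ℕ, Submodule.span ℝ (Set.range (v j)) =
          Submodule.span ℝ (Set.range fun p : Fin i => γ (t j p))) ∧
      (∀ p : Fin i, Filter.Tendsto (fun j : ℕ => v j p) Filter.atTop
        (nhds fun k : Fin n =>
          (Nat.descFactorial (k : ℕ) (p : ℕ) : ℝ) * s ^ ((k : ℕ) - (p : ℕ)) /
            (Nat.factorial (p : ℕ) : ℝ))) ∧
      Submodule.span ℝ (Set.range fun p : Fin i => fun k : Fin n =>
          (Nat.descFactorial (k : ℕ) (p : ℕ) : ℝ) * s ^ ((k : ℕ) - (p : ℕ)) /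
            (Nat.factorial (p : ℕ) : ℝ)) =
        Submodule.span ℝ (Set.range fun p : Fin i => fun k : Fin n =>
          (Nat.descFactorial (k : ℕ) (p : ℕ) : ℝ) * s ^ ((k : ℕ) - (p : ℕ))) := by
  classical
  set U : ℕ → ℕ → ℝ := fun j q => if h : q < i then t j ⟨q, h⟩ else s with hU
  have hUlim : ∀ q : ℕ, Filter.Tendsto (fun j => U j q) Filter.atTop (nhds s) := by
    intro q
    by_cases h : q < i
    · simpa [hU, h] using hlim ⟨q, h⟩
    · simpa [hU, h] using (tendsto_const_nhds : Filter.Tendsto (fun _ : ℕ => s) _ _)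
  set v : ℕ → Fin i → Fin n → ℝ := fun j m k =>
    ∑ p ∈ Finset.range i, ccAux (U j) s p (m : ℕ) * ddAux (U j) p (k : ℕ) with hv
  refine ⟨v, ?_, ?_, ?_⟩
  · -- span equality for each j
    intro j
    set A : Matrix (Fin i) (Fin i) ℝ := Matrix.vandermonde fun q : Fin i => t j q - s with hA
    have hdet : IsUnit A.det := by
      rw [hA, Matrix.det_vandermonde, isUnit_iff_ne_zero]
      refine Finset.prod_ne_zero_iff.2 fun q _ => Finset.prod_ne_zero_iff.2 fun r hr => ?_
      have hqr : q < r := Finset.mem_Ioi.1 hr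
      have : t j r ≠ t j q := fun h => absurd (hinj j h) (Fin.ne_of_gt hqr)
      intro h
      apply this
      have : t j r - s = t j q - s := by linarith [sub_eq_zero.1 h]
      linarith
    have key : (fun p : Fin i => γ (t j p)) = fun q => (A * Matrix.of (v j)) q := by
      funext q k
      rw [hγ]
      have hq : (q : ℕ) < i := q.isLt
      have hUq : U j (q : ℕ) = t j q := by simp [hU, hq]
      calc (t j q) ^ (k : ℕ) = (U j (q : ℕ)) ^ (k : ℕ) := by rw [hUq]
        _ = ∑ m ∈ Finset.range i, (U j (q : ℕ) - s) ^ m *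
              ∑ p ∈ Finset.range i, ccAux (U j) s p m * ddAux (U j) p (k : ℕ) :=
            node_expansion (U j) s (k : ℕ) i (q : ℕ) hq
        _ = ∑ m : Fin i, (U j (q : ℕ) - s) ^ (m : ℕ) *
              ∑ p ∈ Finset.range i, ccAux (U j) s p (m : ℕ) * ddAux (U j) p (k : ℕ) :=
            (Fin.sum_univ_eq_sum_range (fun m => (U j (q : ℕ) - s) ^ m *
              ∑ p ∈ Finset.range i, ccAux (U j) s p m * ddAux (U j) p (k : ℕ)) i).symm
        _ = (A * Matrix.of (v j)) q k := by
            rw [Matrix.mul_apply]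
            refine Finset.sum_congr rfl fun m _ => ?_
            rw [hUq, hA, Matrix.vandermonde_apply]
            rfl
    rw [key, span_rows_mul_eq A hdet (Matrix.of (v j))]
    rfl
  · -- convergence
    intro p
    rw [tendsto_pi_nhds]
    intro k
    have h1 : Filter.Tendsto
        (fun j => ∑ q ∈ Finset.range i, ccAux (U j) s q (p : ℕ) * ddAux (U j) q (k : ℕ))
        Filter.atTop (nhds (∑ q ∈ Finset.range i,
          ccAux (fun _ => s) s q (p : ℕ) * ddAux (fun _ => s) q (k : ℕ))) :=
      tendsto_finset_sum _ fun q _ =>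
        (tendsto_ccAux hUlim q (p : ℕ)).mul (tendsto_ddAux hUlim q (k : ℕ))
    have h2 : ∑ q ∈ Finset.range i, ccAux (fun _ => s) s q (p : ℕ) * ddAux (fun _ => s) q (k : ℕ)
        = (Nat.descFactorial (k : ℕ) (p : ℕ) : ℝ) * s ^ ((k : ℕ) - (p : ℕ)) /
            (Nat.factorial (p : ℕ) : ℝ) := by
      rw [Finset.sum_eq_single (p : ℕ)]
      · rw [ccAux_const, if_pos rfl, one_mul, ddAux_const]
      · intro q _ hq
        rw [ccAux_const, if_neg (Ne.symm hq), zero_mul]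
      · intro h
        exact absurd (Finset.mem_range.2 p.isLt) h
    rw [← h2]
    exact h1
  · -- final span equality
    have heq : (fun p : Fin i => fun k : Fin n =>
          (Nat.descFactorial (k : ℕ) (p : ℕ) : ℝ) * s ^ ((k : ℕ) - (p : ℕ)) /
            (Nat.factorial (p : ℕ) : ℝ))
        = fun p : Fin i => ((Nat.factorial (p : ℕ) : ℝ))⁻¹ • fun k : Fin n =>
            (Nat.descFactorial (k : ℕ) (p : ℕ) : ℝ) * s ^ ((k : ℕ) - (p : ℕ)) := by
      funext p k
      simp [div_eq_mul_inv, mul_comm]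
    rw [heq]
    exact span_range_smul_eq _
      (fun p => inv_ne_zero (Nat.cast_ne_zero.2 (Nat.factorial_ne_zero _))) _
end

section
/- Let γ: ℝ → ℝ^3 be the rational normal curve γ(t) = (6t^2 - 1, (7/2)t^3 + (3/2)t, -(1/2)t^3 + (3/2)t), and for each t let ℓ(t) denote the tangent line {γ(t) + r·γ'(t) : r ∈ ℝ} to γ at γ(t). Then for each u ∈ {-1, 0, 1}, every point (x,y,z) of the tangent line ℓ(u) satisfies x^2 - y^2 + z^2 = 1; that is, the three tangent lines ℓ(-1), ℓ(0), ℓ(1) are contained in the quadric surface Q = {(x,y,z) ∈ ℝ^3 : x^2 - y^2 + z^2 = 1}. -/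
/-!
A line `p + r • v` lies on the quadric `q = 1`, where `q x = x₁² - x₂² + x₃²`, exactly when
`q p = 1`, `p` and `v` are `q`-orthogonal, and `q v = 0`, since `q (p + r • v)` is a quadratic
polynomial in `r` with these three coefficients. Along `γ` the three conditions read
`12 (t (1 - t²))² = 0`, `12 t (1 - t²) (1 - 3t²) = 0` and `108 t² (1 - t²) = 0`, and all of them
hold at the roots `-1, 0, 1` of `t (1 - t²)`.
-/

def lorentzQ (p : ℝ × ℝ × ℝ) : ℝ := p.1 ^ 2 - p.2.1 ^ 2 + p.2.2 ^ 2

def lorentzPolar (p v : ℝ × ℝ × ℝ) : ℝ := p.1 * v.1 - p.2.1 * v.2.1 + p.2.2 * v.2.2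

lemma lorentzQ_add_smul (p v : ℝ × ℝ × ℝ) (r : ℝ) :
    lorentzQ (p + r • v) = lorentzQ p + 2 * r * lorentzPolar p v + r ^ 2 * lorentzQ v := by
  simp only [lorentzQ, lorentzPolar, Prod.fst_add, Prod.snd_add, Prod.smul_fst, Prod.smul_snd,
    smul_eq_mul]
  ring

lemma lorentzQ_add_smul_eq_one {p v : ℝ × ℝ × ℝ} (hp : lorentzQ p = 1)
    (hpv : lorentzPolar p v = 0) (hv : lorentzQ v = 0) (r : ℝ) : lorentzQ (p + r • v) = 1 := by
  rw [lorentzQ_add_smul, hp, hpv, hv]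
  ring

noncomputable def cubicCurve (t : ℝ) : ℝ × ℝ × ℝ :=
  (6 * t ^ 2 - 1, 7 / 2 * t ^ 3 + 3 / 2 * t, -(1 / 2) * t ^ 3 + 3 / 2 * t)

noncomputable def cubicCurveDeriv (t : ℝ) : ℝ × ℝ × ℝ :=
  (12 * t, 21 / 2 * t ^ 2 + 3 / 2, -(3 / 2) * t ^ 2 + 3 / 2)

lemma hasDerivAt_cubicCurve (t : ℝ) : HasDerivAt cubicCurve (cubicCurveDeriv t) t := by
  have hx : HasDerivAt (fun s : ℝ => 6 * s ^ 2 - 1) (12 * t) t :=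
    (((hasDerivAt_pow 2 t).const_mul 6).sub_const 1).congr_deriv (by norm_num; ring)
  have hy : HasDerivAt (fun s : ℝ => 7 / 2 * s ^ 3 + 3 / 2 * s) (21 / 2 * t ^ 2 + 3 / 2) t :=
    (((hasDerivAt_pow 3 t).const_mul (7 / 2)).add
      ((hasDerivAt_id t).const_mul (3 / 2))).congr_deriv (by norm_num; ring)
  have hz : HasDerivAt (fun s : ℝ => -(1 / 2) * s ^ 3 + 3 / 2 * s) (-(3 / 2) * t ^ 2 + 3 / 2) t :=
    (((hasDerivAt_pow 3 t).const_mul (-(1 / 2))).add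
      ((hasDerivAt_id t).const_mul (3 / 2))).congr_deriv (by norm_num; ring)
  exact hx.prodMk (hy.prodMk hz)

lemma lorentzQ_cubicCurve (t : ℝ) :
    lorentzQ (cubicCurve t) = 1 - 12 * (t * (1 - t ^ 2)) ^ 2 := by
  simp only [lorentzQ, cubicCurve]
  ring

lemma lorentzPolar_cubicCurve (t : ℝ) :
    lorentzPolar (cubicCurve t) (cubicCurveDeriv t) =
      -12 * (t * (1 - t ^ 2)) * (1 - 3 * t ^ 2) := by
  simp only [lorentzPolar, cubicCurve, cubicCurveDeriv]
  ring

lemma lorentzQ_cubicCurveDeriv (t : ℝ) :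
    lorentzQ (cubicCurveDeriv t) = 108 * t * (t * (1 - t ^ 2)) := by
  simp only [lorentzQ, cubicCurveDeriv]
  ring

/-- For the rational normal cubic
`γ(t) = (6t² - 1, (7/2)t³ + (3/2)t, -(1/2)t³ + (3/2)t)`, the tangent lines
`ℓ(u) = {γ(u) + r·γ'(u)}` at `u ∈ {-1, 0, 1}` are contained in the quadric
`Q = {x² - y² + z² = 1}`. -/
theorem three_tangent_lines_in_quadric (γ : ℝ → ℝ × ℝ × ℝ)
    (hγ : ∀ t : ℝ, γ t =
      (6 * t ^ 2 - 1, 7 / 2 * t ^ 3 + 3 / 2 * t, -(1 / 2) * t ^ 3 + 3 / 2 * t)) :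
    ∀ u ∈ ({-1, 0, 1} : Set ℝ), ∀ r : ℝ,
      (γ u + r • deriv γ u).1 ^ 2 - (γ u + r • deriv γ u).2.1 ^ 2 +
        (γ u + r • deriv γ u).2.2 ^ 2 = 1 := by
  obtain rfl : γ = cubicCurve := funext hγ
  intro u hu r
  have hroot : u * (1 - u ^ 2) = 0 := by
    rcases hu with rfl | rfl | rfl <;> norm_num
  rw [(hasDerivAt_cubicCurve u).deriv]
  refine lorentzQ_add_smul_eq_one ?_ ?_ ?_ r <;>
    simp [lorentzQ_cubicCurve, lorentzPolar_cubicCurve, lorentzQ_cubicCurveDeriv, hroot]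
end

section
/- Let γ: ℝ → ℝ^3 be the rational normal curve γ(t) = (6t^2 - 1, (7/2)t^3 + (3/2)t, -(1/2)t^3 + (3/2)t), and for s ∈ ℝ let ℓ(s) denote the tangent line {γ(s) + r·γ'(s) : r ∈ ℝ}. Then for every s with 0 < s < 1, the tangent line ℓ(s) meets the quadric Q = {(x,y,z) ∈ ℝ^3 : x^2 - y^2 + z^2 = 1} in exactly two distinct real points; that is, the equation q(γ(s) + r·γ'(s)) = 1, where q(x,y,z) = x^2 - y^2 + z^2, has exactly two distinct real solutions r. -/
/-!
Along the tangent line, `q(γ(s) + r γ'(s)) - 1` is a quadratic polynomial in `r` which factors as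
`12 s (1 - s²) (9 s r² + 2 (3 s² - 1) r - s (1 - s²))`. The outer factor vanishes exactly at
`s ∈ {-1, 0, 1}`, where the tangent line lies on `Q`; the inner quadratic has discriminant
`4 (3 s² + 1) > 0`, hence two distinct real roots whenever `s ≠ 0`.
-/

theorem exists_ne_roots_of_discrim_pos {a b c : ℝ} (ha : a ≠ 0) (hd : 0 < discrim a b c) :
    ∃ r₁ r₂ : ℝ, r₁ ≠ r₂ ∧ ∀ x, a * (x * x) + b * x + c = 0 ↔ x = r₁ ∨ x = r₂ := by
  set e := √(discrim a b c)
  have he : 0 < e := Real.sqrt_pos.mpr hd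
  refine ⟨(-b + e) / (2 * a), (-b - e) / (2 * a), ?_,
    quadratic_eq_zero_iff ha (Real.mul_self_sqrt hd.le).symm⟩
  rw [Ne, div_left_inj' (mul_ne_zero two_ne_zero ha)]
  linarith

theorem hasDerivAt_twistedCubic (s : ℝ) :
    HasDerivAt (fun t : ℝ =>
        ((6 * t ^ 2 - 1, 7 / 2 * t ^ 3 + 3 / 2 * t, -(1 / 2) * t ^ 3 + 3 / 2 * t) : ℝ × ℝ × ℝ))
      (12 * s, 21 / 2 * s ^ 2 + 3 / 2, -(3 / 2) * s ^ 2 + 3 / 2) s := by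
  refine HasDerivAt.prodMk ?_ (HasDerivAt.prodMk ?_ ?_)
  · refine (((hasDerivAt_pow 2 s).const_mul 6).sub_const 1).congr_deriv ?_
    norm_num
    ring
  · refine (((hasDerivAt_pow 3 s).const_mul (7 / 2)).add
      ((hasDerivAt_id s).const_mul (3 / 2))).congr_deriv ?_
    norm_num
    ring
  · refine (((hasDerivAt_pow 3 s).const_mul (-(1 / 2))).add
      ((hasDerivAt_id s).const_mul (3 / 2))).congr_deriv ?_
    norm_num
    ring

theorem quadric_along_tangent_sub_one (s r : ℝ) :
    let p : ℝ × ℝ × ℝ :=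
      (6 * s ^ 2 - 1, 7 / 2 * s ^ 3 + 3 / 2 * s, -(1 / 2) * s ^ 3 + 3 / 2 * s) +
        r • (12 * s, 21 / 2 * s ^ 2 + 3 / 2, -(3 / 2) * s ^ 2 + 3 / 2)
    p.1 ^ 2 - p.2.1 ^ 2 + p.2.2 ^ 2 - 1 =
      12 * s * (1 - s ^ 2) * (9 * s * (r * r) + 2 * (3 * s ^ 2 - 1) * r + -(s * (1 - s ^ 2))) := by
  simp only [Prod.mk_add_mk, Prod.smul_mk, smul_eq_mul]
  ring

theorem discrim_tangent_quadratic (s : ℝ) :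
    discrim (9 * s) (2 * (3 * s ^ 2 - 1)) (-(s * (1 - s ^ 2))) = 4 * (3 * s ^ 2 + 1) := by
  rw [discrim]
  ring

/-- For the rational normal cubic
`γ(t) = (6t² - 1, (7/2)t³ + (3/2)t, -(1/2)t³ + (3/2)t)` and `0 < s < 1`, the
tangent line `ℓ(s) = {γ(s) + r·γ'(s)}` meets the quadric
`Q = {x² - y² + z² = 1}` in exactly two distinct real points; that is, the
equation `q(γ(s) + r·γ'(s)) = 1` has exactly two distinct real solutions `r`. -/
theorem tangent_line_meets_quadric_twice (γ : ℝ → ℝ × ℝ × ℝ)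
    (hγ : ∀ t : ℝ, γ t =
      (6 * t ^ 2 - 1, 7 / 2 * t ^ 3 + 3 / 2 * t, -(1 / 2) * t ^ 3 + 3 / 2 * t))
    (q : ℝ × ℝ × ℝ → ℝ) (hq : ∀ p : ℝ × ℝ × ℝ, q p = p.1 ^ 2 - p.2.1 ^ 2 + p.2.2 ^ 2) :
    ∀ s : ℝ, 0 < s → s < 1 →
      ∃ r₁ r₂ : ℝ, r₁ ≠ r₂ ∧
        ∀ r : ℝ, q (γ s + r • deriv γ s) = 1 ↔ r = r₁ ∨ r = r₂ := by
  intro s hs0 hs1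
  obtain rfl : γ = _ := funext hγ
  have hfactor : 12 * s * (1 - s ^ 2) ≠ 0 := by
    have : 0 < 1 - s ^ 2 := by nlinarith
    positivity
  obtain ⟨r₁, r₂, hne, hroots⟩ := exists_ne_roots_of_discrim_pos (by positivity : 9 * s ≠ 0)
    (by rw [discrim_tangent_quadratic]; positivity)
  refine ⟨r₁, r₂, hne, fun r => ?_⟩
  rw [(hasDerivAt_twistedCubic s).deriv, hq, ← sub_eq_zero, quadric_along_tangent_sub_one,
    mul_eq_zero, or_iff_right hfactor, hroots]
end
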